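/- arXiv:1902.10165 — 2 statements merged into one kernel-verified Lean document; each statement's English description precedes it below -/
import Mathlib

section
/- Let γ > 0 and let f : [1,∞) → (0,1] be non-increasing and regularly varying at infinity with index −γ, i.e. for every a > 0, f(a·t)/f(t) → a^(−γ) as t → ∞. Then, with the sum taken over integers s, lim_{t→∞} [ −log( ∑_{s = ⌈t^{1/13}⌉}^{t} f(s)/s ) ] / log t = γ/13. -/
/-!
Along the geometric sequence `2 ^ n`, regular variation gives
`log f (2 ^ (n + 1)) - log f (2 ^ n) → -γ log 2`; Cesàro averaging and monotonicity of `f` upgrade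
this to `log f x / log x → -γ`. With `m = ⌈t ^ (1/13)⌉` the tail sum lies between `f (2m) / 2`
(the terms with `m < s ≤ 2m`) and `f m * (1 + log t)` (a harmonic sum), and since
`log m / log t → 1/13` both bounds are `t ^ (-γ/13 + o(1))`.
-/

open Filter Real Topology Finset Asymptotics

theorem tendsto_div_natCast_of_tendsto_sub {u : ℕ → ℝ} {l : ℝ}
    (h : Tendsto (fun n => u (n + 1) - u n) atTop (𝓝 l)) :
    Tendsto (fun n : ℕ => u n / n) atTop (𝓝 l) := by
  have hsum : ∀ n : ℕ, (n : ℝ)⁻¹ * ∑ i ∈ range n, (u (i + 1) - u i) = u n / n - u 0 / n := by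
    intro n
    rw [sum_range_sub]
    ring
  have hu₀ : Tendsto (fun n : ℕ => u 0 / n) atTop (𝓝 0) :=
    tendsto_const_nhds.div_atTop tendsto_natCast_atTop_atTop
  simpa using (h.cesaro.congr hsum).add hu₀

theorem tendsto_natCast_add_one_div_natCast :
    Tendsto (fun n : ℕ => ((n : ℝ) + 1) / n) atTop (𝓝 1) := by
  simpa using (tendsto_natCast_div_add_atTop (1 : ℝ)).inv₀ one_ne_zero

theorem tendsto_div_logb_of_antitoneOn {g : ℝ → ℝ} {b a : ℝ} (hb : 1 < b)
    (hg : AntitoneOn g (Set.Ici 1))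
    (h : Tendsto (fun n : ℕ => g (b ^ n) / n) atTop (𝓝 a)) :
    Tendsto (fun x => g x / logb b x) atTop (𝓝 a) := by
  set N : ℝ → ℕ := fun x => ⌊logb b x⌋₊
  have hN : Tendsto N atTop atTop := tendsto_nat_floor_atTop.comp (tendsto_logb_atTop hb)
  have hsucc : Tendsto (fun n : ℕ => g (b ^ (n + 1)) / n) atTop (𝓝 a) := by
    have := (h.comp (tendsto_add_atTop_nat 1)).mul tendsto_natCast_add_one_div_natCast
    rw [mul_one] at this
    refine this.congr' ?_
    filter_upwards [eventually_ne_atTop 0] with n hn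
    simp only [Function.comp_apply, Nat.cast_add, Nat.cast_one]
    field_simp
  have hfloor : Tendsto (fun x => (N x : ℝ) / logb b x) atTop (𝓝 1) :=
    tendsto_nat_floor_div_atTop.comp (tendsto_logb_atTop hb)
  have hdivN : Tendsto (fun x => g x / N x) atTop (𝓝 a) := by
    refine tendsto_of_tendsto_of_tendsto_of_le_of_le' (hsucc.comp hN) (h.comp hN) ?_ ?_ <;>
    filter_upwards [eventually_ge_atTop 1, hN.eventually_ge_atTop 1] with x hx hNx <;>
    have hNpos : (0 : ℝ) < N x := by exact_mod_cast hNx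
    · have hle : x ≤ b ^ (N x + 1) := by
        have := (logb_lt_iff_lt_rpow hb (by positivity)).1 (Nat.lt_floor_add_one (logb b x))
        exact_mod_cast this.le
      exact div_le_div_of_nonneg_right (hg hx (hx.trans hle) hle) hNpos.le
    · have hle : b ^ N x ≤ x := by
        have := (le_logb_iff_rpow_le hb (by positivity)).1 (Nat.floor_le (logb_nonneg hb hx))
        exact_mod_cast this
      exact div_le_div_of_nonneg_right (hg (one_le_pow₀ hb.le) hx hle) hNpos.le
  simpa using (hdivN.mul hfloor).congr' <| by
    filter_upwards [hN.eventually_ge_atTop 1] with x hx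
    rw [div_mul_div_cancel₀ (by exact_mod_cast (by omega : N x ≠ 0))]

theorem tendsto_log_div_log_of_tendsto_comp_mul_div {f : ℝ → ℝ} {b γ : ℝ} (hb : 1 < b)
    (hpos : ∀ x, 1 ≤ x → 0 < f x) (hanti : AntitoneOn f (Set.Ici 1))
    (hrv : Tendsto (fun t => f (b * t) / f t) atTop (𝓝 (b ^ (-γ)))) :
    Tendsto (fun x => log (f x) / log x) atTop (𝓝 (-γ)) := by
  have hbpow : Tendsto (fun n : ℕ => b ^ n) atTop atTop := tendsto_pow_atTop_atTop_of_one_lt hb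
  have hstep : Tendsto (fun n : ℕ => log (f (b ^ (n + 1))) - log (f (b ^ n))) atTop
      (𝓝 (-γ * log b)) := by
    have := ((continuousAt_log (by positivity)).tendsto.comp hrv).comp hbpow
    rw [log_rpow (by positivity)] at this
    refine this.congr' ?_
    filter_upwards [hbpow.eventually_ge_atTop 1] with n hn
    have hbn : 1 ≤ b * b ^ n := by nlinarith
    simp [pow_succ', log_div (hpos _ hbn).ne' (hpos _ hn).ne']
  have hlogb := tendsto_div_logb_of_antitoneOn hb
    (fun x hx y hy hxy => log_le_log (hpos y hy) (hanti hx hy hxy))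
    (tendsto_div_natCast_of_tendsto_sub hstep)
  have hlogb_ne : log b ≠ 0 := (log_pos hb).ne'
  simpa [logb, div_div, div_mul_cancel₀ _ hlogb_ne, neg_div, mul_div_cancel_right₀ _ hlogb_ne]
    using hlogb.div_const (log b)

theorem tendsto_log_one_add_div_atTop :
    Tendsto (fun y : ℝ => log (1 + y) / y) atTop (𝓝 0) := by
  have hshift : Tendsto (fun y : ℝ => 1 + y) atTop atTop :=
    tendsto_atTop_add_const_left _ 1 tendsto_id
  have hO : (fun y : ℝ => 1 + y) =O[atTop] id :=
    (isLittleO_const_id_atTop (1 : ℝ)).isBigO.add (isBigO_refl id atTop)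
  exact ((isLittleO_log_id_atTop.comp_tendsto hshift).trans_isBigO hO).tendsto_div_nhds_zero

section TailSum

variable {f : ℝ → ℝ}

theorem sum_Icc_div_natCast_le (hanti : AntitoneOn f (Set.Ici 1)) {m t : ℕ} (hm : 1 ≤ m)
    (hfm : 0 ≤ f m) : ∑ s ∈ Icc m t, f s / s ≤ f m * (1 + log t) := by
  have hm' : (1 : ℝ) ≤ m := by exact_mod_cast hm
  calc ∑ s ∈ Icc m t, f s / s
      ≤ ∑ s ∈ Icc m t, f m * (s : ℝ)⁻¹ := by
        refine sum_le_sum fun s hs => ?_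
        have hms : (m : ℝ) ≤ s := by exact_mod_cast (mem_Icc.1 hs).1
        rw [div_eq_mul_inv]
        exact mul_le_mul_of_nonneg_right (hanti hm' (hm'.trans hms) hms) (by positivity)
    _ ≤ f m * ∑ s ∈ Icc 1 t, (s : ℝ)⁻¹ := by
        rw [← mul_sum]
        exact mul_le_mul_of_nonneg_left
          (sum_le_sum_of_subset_of_nonneg (Icc_subset_Icc_left hm) fun _ _ _ => by positivity) hfm
    _ ≤ f m * (1 + log t) := by
        gcongr
        simpa [harmonic_eq_sum_Icc] using harmonic_le_one_add_log t

theorem div_two_le_sum_Icc_div_natCast (hanti : AntitoneOn f (Set.Ici 1))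
    (hf : ∀ x, 1 ≤ x → 0 ≤ f x) {m t : ℕ} (hm : 1 ≤ m) (hmt : 2 * m ≤ t) :
    f (2 * m) / 2 ≤ ∑ s ∈ Icc m t, f s / s := by
  have hm' : (1 : ℝ) ≤ m := by exact_mod_cast hm
  calc f (2 * m) / 2 = ∑ s ∈ Ioc m (2 * m), f (2 * m) / (2 * m) := by
        rw [sum_const, Nat.card_Ioc, show 2 * m - m = m by omega, nsmul_eq_mul]
        field_simp
    _ ≤ ∑ s ∈ Ioc m (2 * m), f s / s := by
        refine sum_le_sum fun s hs => ?_
        obtain ⟨hms, hs2m⟩ := mem_Ioc.1 hs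
        have hs1 : (1 : ℝ) ≤ s := by exact_mod_cast hm.trans hms.le
        have hs2m' : (s : ℝ) ≤ 2 * m := by exact_mod_cast hs2m
        have h2m : (1 : ℝ) ≤ 2 * m := by linarith
        exact div_le_div₀ (hf s hs1) (hanti hs1 h2m hs2m') (by positivity) hs2m'
    _ ≤ ∑ s ∈ Icc m t, f s / s :=
        sum_le_sum_of_subset_of_nonneg (Ioc_subset_Icc_self.trans (Icc_subset_Icc_right hmt))
          fun s hs _ =>
            div_nonneg (hf s (by exact_mod_cast hm.trans (mem_Icc.1 hs).1)) s.cast_nonneg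

end TailSum

theorem tendsto_log_mul_natCeil_rpow_div_log {c θ : ℝ} (hc : 0 < c) (hθ : 0 ≤ θ) :
    Tendsto (fun t : ℕ => log (c * ⌈(t : ℝ) ^ θ⌉₊) / log t) atTop (𝓝 θ) := by
  have hlog : Tendsto (fun t : ℕ => log t) atTop atTop :=
    tendsto_log_atTop.comp tendsto_natCast_atTop_atTop
  have hbound : ∀ c' : ℝ, Tendsto (fun t : ℕ => log c' / log t + θ) atTop (𝓝 θ) := fun c' => by
    simpa using (tendsto_const_nhds.div_atTop hlog).add_const θ
  have hsandwich : ∀ᶠ t : ℕ in atTop, 0 < log t ∧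
      log c + θ * log t ≤ log (c * ⌈(t : ℝ) ^ θ⌉₊) ∧
      log (c * ⌈(t : ℝ) ^ θ⌉₊) ≤ log (2 * c) + θ * log t := by
    filter_upwards [eventually_ge_atTop 2] with t ht
    have ht' : (2 : ℝ) ≤ t := by exact_mod_cast ht
    have hpow : 1 ≤ (t : ℝ) ^ θ := one_le_rpow (by linarith) hθ
    have hceil_le : (⌈(t : ℝ) ^ θ⌉₊ : ℝ) ≤ 2 * (t : ℝ) ^ θ := by
      linarith [Nat.ceil_lt_add_one (zero_le_one.trans hpow)]
    have hlog_pow : log c + θ * log t = log (c * (t : ℝ) ^ θ) := by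
      rw [log_mul hc.ne' (by positivity), log_rpow (by positivity)]
    refine ⟨log_pos (by linarith), ?_, ?_⟩
    · rw [hlog_pow]
      gcongr
      exact Nat.le_ceil _
    · rw [log_mul two_ne_zero hc.ne', add_assoc, hlog_pow, ← log_mul two_ne_zero (by positivity),
        mul_left_comm]
      have : (0 : ℝ) < ⌈(t : ℝ) ^ θ⌉₊ := by linarith [Nat.le_ceil ((t : ℝ) ^ θ)]
      gcongr
  refine tendsto_of_tendsto_of_tendsto_of_le_of_le' (hbound c) (hbound (2 * c)) ?_ ?_ <;>
  · filter_upwards [hsandwich] with t ⟨hlogt, hlo, hhi⟩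
    rw [div_add' _ _ _ hlogt.ne', div_le_div_iff_of_pos_right hlogt]
    linarith

theorem tendsto_comp_div_log {g : ℝ → ℝ} {m : ℕ → ℝ} {a θ : ℝ}
    (hg : Tendsto (fun x => g x / log x) atTop (𝓝 a)) (hm : Tendsto m atTop atTop)
    (hlogm : Tendsto (fun t : ℕ => log (m t) / log t) atTop (𝓝 θ)) :
    Tendsto (fun t : ℕ => g (m t) / log t) atTop (𝓝 (a * θ)) := by
  refine ((hg.comp hm).mul hlogm).congr' ?_
  filter_upwards [hm.eventually_gt_atTop 1] with t ht
  exact div_mul_div_cancel₀ (log_pos ht).ne'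

theorem eventually_two_mul_natCeil_rpow_le {θ : ℝ} (hθ : θ < 1) :
    ∀ᶠ t : ℕ in atTop, 2 * ⌈(t : ℝ) ^ θ⌉₊ ≤ t := by
  have hsmall : ∀ᶠ x : ℝ in atTop, x ^ (θ - 1) ≤ 4⁻¹ := by
    have := tendsto_rpow_neg_atTop (sub_pos.2 hθ)
    rw [neg_sub] at this
    exact this.eventually (eventually_le_nhds (by norm_num))
  filter_upwards [tendsto_natCast_atTop_atTop.eventually hsmall, eventually_ge_atTop 4]
    with t hsmall ht
  have ht' : (4 : ℝ) ≤ t := by exact_mod_cast ht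
  have hpow : (t : ℝ) ^ θ ≤ t / 4 := by
    rw [rpow_sub_one (by positivity), div_le_iff₀ (by positivity)] at hsmall
    linarith
  have := Nat.ceil_lt_add_one (rpow_nonneg (t.cast_nonneg) θ)
  exact_mod_cast (by linarith : (2 * ⌈(t : ℝ) ^ θ⌉₊ : ℝ) ≤ t)

theorem tendsto_neg_log_sum_Icc_natCeil_rpow_div_log {f : ℝ → ℝ} {γ θ : ℝ} (hθ₀ : 0 < θ)
    (hθ₁ : θ < 1) (hpos : ∀ x, 1 ≤ x → 0 < f x) (hanti : AntitoneOn f (Set.Ici 1))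
    (hf : Tendsto (fun x => log (f x) / log x) atTop (𝓝 (-γ))) :
    Tendsto (fun t : ℕ => -log (∑ s ∈ Icc ⌈(t : ℝ) ^ θ⌉₊ t, f s / s) / log t)
      atTop (𝓝 (γ * θ)) := by
  set m : ℕ → ℕ := fun t => ⌈(t : ℝ) ^ θ⌉₊
  have hm : Tendsto (fun t => (m t : ℝ)) atTop atTop :=
    tendsto_atTop_mono (fun t => Nat.le_ceil _)
      ((tendsto_rpow_atTop hθ₀).comp tendsto_natCast_atTop_atTop)
  have hlog : Tendsto (fun t : ℕ => log t) atTop atTop :=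
    tendsto_log_atTop.comp tendsto_natCast_atTop_atTop
  have hneg : Tendsto (fun x => -log (f x) / log x) atTop (𝓝 γ) := by
    simpa [neg_div] using hf.neg
  have hlower : Tendsto (fun t : ℕ => (-log (f (m t)) - log (1 + log t)) / log t) atTop
      (𝓝 (γ * θ)) := by
    have := tendsto_comp_div_log hneg hm
      (by simpa using tendsto_log_mul_natCeil_rpow_div_log one_pos hθ₀.le)
    simpa [sub_div] using this.sub (tendsto_log_one_add_div_atTop.comp hlog)
  have hupper : Tendsto (fun t : ℕ => (-log (f (2 * m t)) + log 2) / log t) atTop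
      (𝓝 (γ * θ)) := by
    have := tendsto_comp_div_log hneg (hm.const_mul_atTop two_pos)
      (tendsto_log_mul_natCeil_rpow_div_log two_pos hθ₀.le)
    simpa [add_div] using this.add (tendsto_const_nhds.div_atTop hlog)
  have hbounds : ∀ᶠ t : ℕ in atTop, 0 < log t ∧
      f (2 * m t) / 2 ≤ ∑ s ∈ Icc (m t) t, f s / s ∧
      ∑ s ∈ Icc (m t) t, f s / s ≤ f (m t) * (1 + log t) := by
    filter_upwards [eventually_two_mul_natCeil_rpow_le hθ₁, hm.eventually_ge_atTop 1,
      eventually_ge_atTop 2] with t hmt hm1 ht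
    have hm1' : 1 ≤ m t := by exact_mod_cast hm1
    have hf : ∀ x, 1 ≤ x → 0 ≤ f x := fun x hx => (hpos x hx).le
    exact ⟨log_pos (by exact_mod_cast ht), div_two_le_sum_Icc_div_natCast hanti hf hm1' hmt,
      sum_Icc_div_natCast_le hanti hm1' (hf _ hm1)⟩
  refine tendsto_of_tendsto_of_tendsto_of_le_of_le' hlower hupper ?_ ?_ <;>
  filter_upwards [hbounds, hm.eventually_ge_atTop 1] with t ⟨hlogt, hlo, hhi⟩ hm1 <;>
  have hlo_pos : 0 < f (2 * m t) / 2 := div_pos (hpos _ (by linarith)) two_pos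
  · have := log_le_log (hlo_pos.trans_le hlo) hhi
    rw [log_mul (hpos _ hm1).ne' (by positivity)] at this
    gcongr
    linarith
  · have := log_le_log hlo_pos hlo
    rw [log_div (hpos _ (by linarith)).ne' two_ne_zero] at this
    gcongr
    linarith

theorem regularly_varying_tail_sum_log_general (γ : ℝ) (f : ℝ → ℝ)
    (hrange : ∀ t : ℝ, 1 ≤ t → f t ∈ Set.Ioc (0 : ℝ) 1)
    (hmono : ∀ s t : ℝ, 1 ≤ s → s ≤ t → f t ≤ f s)
    (hrv : ∀ a : ℝ, 0 < a →
      Tendsto (fun t : ℝ => f (a * t) / f t) atTop (nhds (a ^ (-γ)))) :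
    Tendsto
      (fun t : ℕ =>
        -Real.log (∑ s ∈ Finset.Icc ⌈(t : ℝ) ^ ((1 : ℝ) / 13)⌉₊ t, f s / s) / Real.log t)
      atTop (nhds (γ / 13)) := by
  have hpos : ∀ x, 1 ≤ x → 0 < f x := fun x hx => (hrange x hx).1
  have hanti : AntitoneOn f (Set.Ici 1) := fun s hs t _ hst => hmono s t hs hst
  have hlog := tendsto_log_div_log_of_tendsto_comp_mul_div one_lt_two hpos hanti (hrv 2 two_pos)
  rw [show γ / 13 = γ * (1 / 13) by ring]
  exact tendsto_neg_log_sum_Icc_natCeil_rpow_div_log (by norm_num) (by norm_num) hpos hanti hlog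

/-- If `f : [1,∞) → (0,1]` is non-increasing and regularly varying at infinity with
index `-γ` (γ > 0), then `-log(∑_{s=⌈t^{1/13}⌉}^{t} f(s)/s) / log t → γ/13` as `t → ∞`
(the sum being over integers `s`). -/
theorem regularly_varying_tail_sum_log (γ : ℝ) (hγ : 0 < γ) (f : ℝ → ℝ)
    (hrange : ∀ t : ℝ, 1 ≤ t → f t ∈ Set.Ioc (0 : ℝ) 1)
    (hmono : ∀ s t : ℝ, 1 ≤ s → s ≤ t → f t ≤ f s)
    (hrv : ∀ a : ℝ, 0 < a →
      Tendsto (fun t : ℝ => f (a * t) / f t) atTop (nhds (a ^ (-γ)))) :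
    Tendsto
      (fun t : ℕ =>
        -Real.log (∑ s ∈ Finset.Icc ⌈(t : ℝ) ^ ((1 : ℝ) / 13)⌉₊ t, f s / s) / Real.log t)
      atTop (nhds (γ / 13)) :=
  regularly_varying_tail_sum_log_general γ f hrange hmono hrv
end

section
/- For every ξ ∈ (0,1) there exists a threshold T ∈ ℕ such that for all integers t ≥ T, all reals p ∈ (0,1], and all integers l satisfying 1 ≤ l, l · log log t ≤ (1/3) · log t, and l · (−log p) ≤ (1/3) · log t, one has binom( ⌊(1−ξ)·t⌋ , l ) · p^l · (2t)^{−(l−1)} · ( 1 − 2l/(ξ·t) )^{t} ≥ t^{1/4}, where binom(n,l) denotes the binomial coefficient. -/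
open Filter Real

/-!
Take logarithms. As long as `2l ≤ (1-ξ)t` and `4l ≤ ξt`, the binomial coefficient is at least
`((1-ξ)t/(2l))^l` and `(1 - 2l/(ξt))^t ≥ exp(-4l/ξ)`, so the logarithm of the left-hand side is at
least `log t - l log l + l log p - K l` with `K = 4/ξ + 2 log 2 - log(1-ξ)`. The constraints on `l`
bound each error term: `l log l ≤ l log log t ≤ (log t)/3`, `-l log p ≤ (log t)/3`, and
`K l ≤ (l log log t)/4 ≤ (log t)/12` once `log log t ≥ 4K`, which leaves `(log t)/4`. Since
`l ≤ (log t)/3 = o(t)`, the two size conditions on `l` hold for large `t`.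
-/

lemma Nat.div_two_mul_pow_le_choose_floor {a : ℝ} {l : ℕ} (hl : 0 < l) (h : 2 * l ≤ a) :
    (a / (2 * l)) ^ l ≤ (⌊a⌋₊.choose l : ℝ) := by
  have hl' : (0 : ℝ) < l := by exact_mod_cast hl
  have hla : l ≤ ⌊a⌋₊ + 1 := by have := Nat.le_floor (show (l : ℝ) ≤ a by linarith); omega
  have hbase : a / (2 * l) ≤ ((⌊a⌋₊ + 1 - l : ℕ) : ℝ) / l := by
    rw [Nat.cast_sub hla, ← div_div]
    push_cast
    gcongr
    linarith [Nat.lt_floor_add_one a]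
  calc (a / (2 * l)) ^ l ≤ (((⌊a⌋₊ + 1 - l : ℕ) : ℝ) / l) ^ l := by
        gcongr
        exact div_nonneg (by linarith) (by positivity)
    _ = ((⌊a⌋₊ + 1 - l : ℕ) : ℝ) ^ l / (l : ℝ) ^ l := div_pow _ _ _
    _ ≤ ((⌊a⌋₊ + 1 - l : ℕ) : ℝ) ^ l / l.factorial := by
        gcongr
        exact_mod_cast l.factorial_le_pow
    _ ≤ (⌊a⌋₊.choose l : ℝ) := Nat.pow_le_choose l _

lemma Real.neg_two_mul_le_log_one_sub {x : ℝ} (hx0 : 0 ≤ x) (hx : x ≤ 1 / 2) :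
    -2 * x ≤ log (1 - x) := by
  have hpos : 0 < 1 - x := by linarith
  have hinv : (1 - x)⁻¹ ≤ 2 := by
    rw [inv_le_comm₀ hpos two_pos]; linarith
  calc -2 * x ≤ -x * (1 - x)⁻¹ := by nlinarith
    _ = 1 - (1 - x)⁻¹ := by field_simp; ring
    _ ≤ log (1 - x) := one_sub_inv_le_log_of_pos hpos

noncomputable def isolatedPathsLowerBound (ξ p : ℝ) (t l : ℕ) : ℝ :=
  ((⌊(1 - ξ) * (t : ℝ)⌋₊.choose l : ℕ) : ℝ) * p ^ l * (2 * (t : ℝ)) ^ (-((l : ℤ) - 1)) *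
    (1 - 2 * (l : ℝ) / (ξ * t)) ^ t

lemma exp_le_isolatedPathsLowerBound {ξ p : ℝ} {t l : ℕ} (hp : 0 < p) (hl : 0 < l) (ht : 0 < t)
    (h₁ : 2 * l ≤ (1 - ξ) * t) (h₂ : 4 * l ≤ ξ * t) :
    exp (log t - l * log l + l * log p - l * (4 / ξ + 2 * log 2 - log (1 - ξ))) ≤
      isolatedPathsLowerBound ξ p t l := by
  unfold isolatedPathsLowerBound
  have hl' : (0 : ℝ) < l := by exact_mod_cast hl
  have ht' : (0 : ℝ) < t := by exact_mod_cast ht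
  have hξ₀ : 0 < ξ := pos_of_mul_pos_left (by linarith) ht'.le
  have hξ₁ : 0 < 1 - ξ := pos_of_mul_pos_left (by linarith) ht'.le
  set x := 2 * (l : ℝ) / (ξ * t) with hx
  have hx₀ : 0 ≤ x := by positivity
  have hx₁ : x ≤ 1 / 2 := by rw [hx, div_le_iff₀ (by positivity)]; linarith
  have hchoose : l * (log (1 - ξ) + log t - log 2 - log l) ≤
      log (⌊(1 - ξ) * (t : ℝ)⌋₊.choose l : ℝ) := by
    have := log_le_log (by positivity) (Nat.div_two_mul_pow_le_choose_floor hl h₁)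
    rwa [log_pow, log_div (by positivity) (by positivity), log_mul hξ₁.ne' ht'.ne',
      log_mul two_ne_zero hl'.ne', ← sub_sub] at this
  have hdecay : -(4 * l / ξ) ≤ t * log (1 - x) := by
    calc -(4 * l / ξ) = t * (-2 * x) := by rw [hx]; field_simp; ring
      _ ≤ t * log (1 - x) := by gcongr; exact neg_two_mul_le_log_one_sub hx₀ hx₁
  have hchoose_pos : (0 : ℝ) < ⌊(1 - ξ) * (t : ℝ)⌋₊.choose l :=
    (pow_pos (by positivity) l).trans_le (Nat.div_two_mul_pow_le_choose_floor hl h₁)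
  have hdecay_pos : 0 < (1 - x) ^ t := pow_pos (by linarith) t
  rw [← le_log_iff_exp_le (by positivity), log_mul (by positivity) hdecay_pos.ne',
    log_mul (by positivity) (by positivity), log_mul hchoose_pos.ne' (by positivity),
    log_pow, log_pow, log_zpow, log_mul two_ne_zero ht'.ne']
  push_cast
  linear_combination hchoose + hdecay + log_nonneg one_le_two

lemma eventually_log_natCast_le_mul {ε : ℝ} (hε : 0 < ε) :
    ∀ᶠ t : ℕ in atTop, log t ≤ ε * t := by
  filter_upwards [isLittleO_log_id_atTop.natCast_atTop.bound hε] with t ht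
  simpa using (le_abs_self _).trans ht

/-- For every `ξ ∈ (0,1)` there exists `T ∈ ℕ` such that for all `t ≥ T`, all
`p ∈ (0,1]` and all `l ≥ 1` with `l·log log t ≤ (1/3)·log t` and
`l·(-log p) ≤ (1/3)·log t`, one has
`binom(⌊(1-ξ)t⌋, l) · p^l · (2t)^{-(l-1)} · (1 - 2l/(ξt))^t ≥ t^{1/4}`. -/
theorem isolated_paths_first_moment_lower_bound (ξ : ℝ) (hξ : ξ ∈ Set.Ioo (0 : ℝ) 1) :
    ∃ T : ℕ, ∀ t : ℕ, T ≤ t → ∀ p : ℝ, p ∈ Set.Ioc (0 : ℝ) 1 → ∀ l : ℕ, 1 ≤ l →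
      (l : ℝ) * Real.log (Real.log t) ≤ (1 / 3) * Real.log t →
      (l : ℝ) * (-Real.log p) ≤ (1 / 3) * Real.log t →
      ((⌊(1 - ξ) * (t : ℝ)⌋₊.choose l : ℕ) : ℝ) * p ^ l * (2 * (t : ℝ)) ^ (-((l : ℤ) - 1)) *
          (1 - 2 * (l : ℝ) / (ξ * t)) ^ t
        ≥ (t : ℝ) ^ ((1 : ℝ) / 4) := by
  obtain ⟨hξ₀, hξ₁⟩ := hξ
  have hξξ : 0 < ξ * (1 - ξ) := mul_pos hξ₀ (by linarith)
  set K := 4 / ξ + 2 * log 2 - log (1 - ξ)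
  have hloglog : Tendsto (fun t : ℕ => log (log t)) atTop atTop :=
    (tendsto_log_atTop.comp tendsto_log_atTop).comp tendsto_natCast_atTop_atTop
  obtain ⟨T, hT⟩ := eventually_atTop.mp <|
    ((hloglog.eventually_ge_atTop 1).and (hloglog.eventually_ge_atTop (4 * K))).and
      (eventually_log_natCast_le_mul (half_pos hξξ))
  refine ⟨T, fun t hTt p ⟨hp, _⟩ l hl hl_loglog hl_logp => ?_⟩
  obtain ⟨⟨hloglog_one, hloglog_K⟩, hlog_le⟩ := hT t hTt
  have hlogt : 1 ≤ log t := by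
    by_contra! h
    linarith [log_nonpos (log_natCast_nonneg t) h.le]
  have ht : 0 < t := Nat.pos_of_ne_zero (by rintro rfl; norm_num at hlogt)
  have hl' : (1 : ℝ) ≤ l := by exact_mod_cast hl
  have hl_le : (l : ℝ) ≤ log t / 3 := by nlinarith
  have hlogl : l * log l ≤ log t / 3 :=
    calc l * log l ≤ l * log (log t) := by gcongr; linarith
      _ ≤ log t / 3 := by linarith [hl_loglog]
  have hlK : l * K ≤ log t / 12 := by nlinarith
  have ht' : (0 : ℝ) < t := by exact_mod_cast ht
  calc (t : ℝ) ^ ((1 : ℝ) / 4) = exp (log t / 4) := by rw [rpow_def_of_pos ht']; ring_nf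
    _ ≤ exp (log t - l * log l + l * log p - l * K) := exp_le_exp.mpr (by linarith)
    _ ≤ _ := exp_le_isolatedPathsLowerBound hp hl ht (by nlinarith) (by nlinarith)
end
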